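/- Let (x', y') be a matching pair with LCIS→(x', y') = r, where r ≥ 2. Then there exists a matching pair (x'', y'') with x'' < x', y'' < y', A[x''] < A[x'], and LCIS→(x'', y'') = r − 1. -/
import Mathlib


/-- `IsCIS A B i j ia jb` says that the index sequences `ia, jb` form a common
(strictly) increasing subsequence of `A[1..i]` and `B[1..j]`. -/
def IsCIS (A B : ℕ → ℤ) (i j : ℕ) {l : ℕ} (ia jb : Fin l → ℕ) : Prop :=
  StrictMono ia ∧ StrictMono jb ∧
  (∀ k, 1 ≤ ia k ∧ ia k ≤ i) ∧
  (∀ k, 1 ≤ jb k ∧ jb k ≤ j) ∧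
  (∀ k, A (ia k) = B (jb k)) ∧
  StrictMono fun k => A (ia k)

/-- `dpLCIS A B t i j` : maximal length of a common increasing subsequence of
`A[1..i]` and `B[1..j]` all of whose values are `≤ t` (0 if none exists). -/
noncomputable def dpLCIS (A B : ℕ → ℤ) (t : ℤ) (i j : ℕ) : ℕ :=
  sSup {l | ∃ ia jb : Fin l → ℕ, IsCIS A B i j ia jb ∧ ∀ k, A (ia k) ≤ t}

/-- `lcisTo A B x y` : maximal length of a common increasing subsequence of
`A[1..x]` and `B[1..y]` whose last indices are exactly `x` and `y`. -/
noncomputable def lcisTo (A B : ℕ → ℤ) (x y : ℕ) : ℕ :=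
  sSup {l | ∃ ia jb : Fin l → ℕ, IsCIS A B x y ia jb ∧
    ∃ k : Fin l, (∀ k', k' ≤ k) ∧ ia k = x ∧ jb k = y}

/-- `lcisLen A B i j` : maximal length of a common increasing subsequence of
`A[1..i]` and `B[1..j]`. -/
noncomputable def lcisLen (A B : ℕ → ℤ) (i j : ℕ) : ℕ :=
  sSup {l | ∃ ia jb : Fin l → ℕ, IsCIS A B i j ia jb}

lemma strictMono_fin_lb {l : ℕ} (ia : Fin l → ℕ) (hm : StrictMono ia)
    (h1 : ∀ k, 1 ≤ ia k) : ∀ m (hml : m < l), m + 1 ≤ ia ⟨m, hml⟩ := by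
  intro m
  induction m with
  | zero => intro hml; exact h1 _
  | succ p ih =>
    intro hml
    have hp : p < l := Nat.lt_of_succ_lt hml
    have h2 : ia ⟨p, hp⟩ < ia ⟨p + 1, hml⟩ := hm (by simp [Fin.lt_def])
    have := ih hp
    omega

lemma isCIS_len_le {A B : ℕ → ℤ} {i j l : ℕ} {ia jb : Fin l → ℕ}
    (h : IsCIS A B i j ia jb) : l ≤ i := by
  obtain ⟨hm, _, hbound, _⟩ := h
  rcases Nat.eq_zero_or_pos l with hl | hl
  · omega
  · have hml : l - 1 < l := by omega
    have := strictMono_fin_lb ia hm (fun k => (hbound k).1) (l - 1) hml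
    have := (hbound ⟨l - 1, hml⟩).2
    omega

theorem lcisTo_pred_pair (n : ℕ) (A B : ℕ → ℤ) (x' y' : ℕ) (r : ℕ)
    (hx1 : 1 ≤ x') (hxn : x' ≤ n) (hy1 : 1 ≤ y') (hyn : y' ≤ n)
    (hmatch : A x' = B y') (hr : lcisTo A B x' y' = r) (hr2 : 2 ≤ r) :
    ∃ x'' y'', 1 ≤ x'' ∧ x'' < x' ∧ 1 ≤ y'' ∧ y'' < y' ∧
      A x'' = B y'' ∧ A x'' < A x' ∧ lcisTo A B x'' y'' = r - 1 := by
  classical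
  set S : Set ℕ := {l | ∃ ia jb : Fin l → ℕ, IsCIS A B x' y' ia jb ∧
    ∃ k : Fin l, (∀ k', k' ≤ k) ∧ ia k = x' ∧ jb k = y'} with hS
  have hbddS : BddAbove S := ⟨x', fun l hl => by
    obtain ⟨ia, jb, hCIS, _⟩ := hl; exact isCIS_len_le hCIS⟩
  have hne : S.Nonempty := by
    by_contra hne
    rw [Set.not_nonempty_iff_eq_empty] at hne
    rw [lcisTo, ← hS, hne] at hr
    simp at hr
    omega
  have hmem : r ∈ S := by
    rw [lcisTo, ← hS] at hr
    rw [← hr]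
    exact Nat.sSup_mem hne hbddS
  obtain ⟨ia, jb, hCIS, k, hkmax, hiax, hjby⟩ := hmem
  obtain ⟨hmia, hmjb, hbia, hbjb, heq, hmA⟩ := hCIS
  have hkval : k.val = r - 1 := by
    have := hkmax ⟨r - 1, by omega⟩
    have hk2 : k.val ≤ r - 1 := by omega
    simp [Fin.le_def] at this
    omega
  have hr1 : r - 1 < r := by omega
  set k1 : Fin r := ⟨r - 2, by omega⟩ with hk1
  have hk1k : k1 < k := by rw [Fin.lt_def]; simp [hk1, hkval]; omega
  refine ⟨ia k1, jb k1, (hbia k1).1, ?_, (hbjb k1).1, ?_, heq k1, ?_, ?_⟩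
  · rw [← hiax]; exact hmia hk1k
  · rw [← hjby]; exact hmjb hk1k
  · rw [← hiax]; exact hmA hk1k
  -- main part: lcisTo A B (ia k1) (jb k1) = r - 1
  set S' : Set ℕ := {l | ∃ ia' jb' : Fin l → ℕ, IsCIS A B (ia k1) (jb k1) ia' jb' ∧
    ∃ k : Fin l, (∀ k', k' ≤ k) ∧ ia' k = ia k1 ∧ jb' k = jb k1} with hS'
  have hbddS' : BddAbove S' := ⟨ia k1, fun l hl => by
    obtain ⟨ia', jb', hCIS, _⟩ := hl; exact isCIS_len_le hCIS⟩
  have hmem' : r - 1 ∈ S' := by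
    refine ⟨fun m => ia ⟨m.val, by omega⟩, fun m => jb ⟨m.val, by omega⟩,
      ⟨fun a b hab => hmia (Fin.mk_lt_mk.mpr hab),
       fun a b hab => hmjb (Fin.mk_lt_mk.mpr hab),
       fun m => ⟨(hbia _).1, hmia.monotone (Fin.mk_le_mk.mpr (by omega))⟩,
       fun m => ⟨(hbjb _).1, hmjb.monotone (Fin.mk_le_mk.mpr (by omega))⟩,
       fun m => heq _,
       fun a b hab => hmA (Fin.mk_lt_mk.mpr hab)⟩,
      ⟨r - 2, by omega⟩, fun k' => Fin.le_def.mpr (by simp only [Fin.val_mk]; have := k'.isLt; omega), ?_, ?_⟩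
    · congr 1
    · congr 1
  have hub : ∀ l ∈ S', l ≤ r - 1 := by
    intro l hl
    obtain ⟨ia', jb', ⟨hmia', hmjb', hbia', hbjb', heq', hmA'⟩, k', hkmax', hiax', hjby'⟩ := hl
    have hl1 : 1 ≤ l := by have := k'.isLt; omega
    have hkval' : k'.val = l - 1 := by
      have := hkmax' ⟨l - 1, by omega⟩
      have : l - 1 ≤ k'.val := this
      omega
    have hlex : ∀ m : Fin l, ia' m ≤ ia k1 := by
      intro m
      rw [← hiax']
      exact hmia'.monotone (hkmax' m)
    have hleA : ∀ m : Fin l, A (ia' m) ≤ A (ia k1) := by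
      intro m
      rw [← hiax']
      exact hmA'.monotone (hkmax' m)
    have hx'' : ia k1 < x' := by rw [← hiax]; exact hmia hk1k
    have hA'' : A (ia k1) < A x' := by rw [← hiax]; exact hmA hk1k
    have hmemS : l + 1 ∈ S := by
      refine ⟨fun m => if h : m.val < l then ia' ⟨m.val, h⟩ else x',
        fun m => if h : m.val < l then jb' ⟨m.val, h⟩ else y', ?_, Fin.last l, ?_, ?_, ?_⟩
      · refine ⟨?_, ?_, ?_, ?_, ?_, ?_⟩
        · intro a b hab
          have hab' : a.val < b.val := hab
          by_cases hb : b.val < l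
          · have ha : a.val < l := by omega
            simp only [dif_pos ha, dif_pos hb]
            exact hmia' (Fin.mk_lt_mk.mpr hab')
          · have ha : a.val < l := by have := b.isLt; omega
            simp only [dif_pos ha, dif_neg hb]
            exact lt_of_le_of_lt (hlex _) hx''
        · intro a b hab
          have hab' : a.val < b.val := hab
          by_cases hb : b.val < l
          · have ha : a.val < l := by omega
            simp only [dif_pos ha, dif_pos hb]
            exact hmjb' (Fin.mk_lt_mk.mpr hab')
          · have ha : a.val < l := by have := b.isLt; omega
            simp only [dif_pos ha, dif_neg hb]
            have : jb' ⟨a.val, ha⟩ ≤ jb k1 := by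
              rw [← hjby']; exact hmjb'.monotone (hkmax' _)
            have hy'' : jb k1 < y' := by rw [← hjby]; exact hmjb hk1k
            omega
        · intro m
          by_cases hm : m.val < l
          · simp only [dif_pos hm]
            exact ⟨(hbia' _).1, le_of_lt (lt_of_le_of_lt (le_trans (hbia' _).2 (le_refl _)) hx'')⟩
          · simp only [dif_neg hm]; exact ⟨hx1, le_refl _⟩
        · intro m
          by_cases hm : m.val < l
          · simp only [dif_pos hm]
            have hy'' : jb k1 < y' := by rw [← hjby]; exact hmjb hk1k
            exact ⟨(hbjb' _).1, by have := (hbjb' ⟨m.val, hm⟩).2; omega⟩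
          · simp only [dif_neg hm]; exact ⟨hy1, le_refl _⟩
        · intro m
          by_cases hm : m.val < l
          · simp only [dif_pos hm]; exact heq' _
          · simp only [dif_neg hm]; exact hmatch
        · intro a b hab
          have hab' : a.val < b.val := hab
          by_cases hb : b.val < l
          · have ha : a.val < l := by omega
            simp only [dif_pos ha, dif_pos hb]
            exact hmA' (Fin.mk_lt_mk.mpr hab')
          · have ha : a.val < l := by have := b.isLt; omega
            simp only [dif_pos ha, dif_neg hb]
            exact lt_of_le_of_lt (hleA _) hA''
      · exact fun k' => Fin.le_last k'
      · simp [Fin.last]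
      · simp [Fin.last]
    have : l + 1 ≤ r := by
      rw [lcisTo, ← hS] at hr
      rw [← hr]
      exact le_csSup hbddS hmemS
    omega
  rw [lcisTo, ← hS']
  exact le_antisymm (csSup_le ⟨r - 1, hmem'⟩ hub) (le_csSup hbddS' hmem')
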